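/- arXiv:2009.06540 — 4 statements merged into one kernel-verified Lean document; each statement's English description precedes it below -/
import Mathlib

section
/- For every finite index set S and all families of nonnegative reals (a_i)_{i∈S}, (b_i)_{i∈S}: ∑_{i∈S} |a_i − b_i| ≤ ( ∑_{i∈S, a_i + b_i > 0} (a_i − b_i)² / √(a_i + b_i) )^{1/2} · ( ∑_{i∈S} (a_i + b_i) )^{1/4} · |S|^{1/4}. -/
/-!
Put `sᵢ = aᵢ + bᵢ` and drop the indices with `sᵢ = 0`, where `aᵢ = bᵢ = 0`. Cauchy–Schwarz with
weights `√sᵢ` gives `(∑ |aᵢ - bᵢ|)² ≤ (∑ (aᵢ - bᵢ)² / √sᵢ) · ∑ √sᵢ`, and Cauchy–Schwarz once more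
gives `(∑ √sᵢ)² ≤ |S| · ∑ sᵢ`. Squaring the first bound and taking fourth roots yields the claim.
-/

open scoped BigOperators Classical

open Finset

theorem sq_sum_abs_le_sum_sq_div_mul_sum {ι : Type*} (s : Finset ι) (f w : ι → ℝ)
    (hw : ∀ i ∈ s, 0 < w i) :
    (∑ i ∈ s, |f i|) ^ 2 ≤ (∑ i ∈ s, f i ^ 2 / w i) * ∑ i ∈ s, w i :=
  sum_sq_le_sum_mul_sum_of_sq_le_mul s (fun i hi => div_nonneg (sq_nonneg _) (hw i hi).le)
    (fun i hi => (hw i hi).le) fun i hi => by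
      rw [sq_abs, div_mul_cancel₀ _ (hw i hi).ne']

theorem sq_sum_sqrt_le_card_mul_sum {ι : Type*} (s : Finset ι) (c : ι → ℝ)
    (hc : ∀ i ∈ s, 0 ≤ c i) :
    (∑ i ∈ s, √(c i)) ^ 2 ≤ #s * ∑ i ∈ s, c i := by
  calc (∑ i ∈ s, √(c i)) ^ 2 ≤ #s * ∑ i ∈ s, √(c i) ^ 2 := sq_sum_le_card_mul_sum_sq
    _ = #s * ∑ i ∈ s, c i := by
      rw [sum_congr rfl fun i hi => Real.sq_sqrt (hc i hi)]

theorem le_rpow_mul_rpow_mul_rpow_of_pow_four_le {x y z w : ℝ} (hx : 0 ≤ x) (hy : 0 ≤ y)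
    (hz : 0 ≤ z) (hw : 0 ≤ w) (h : x ^ 4 ≤ y ^ 2 * z * w) :
    x ≤ y ^ ((1 : ℝ) / 2) * z ^ ((1 : ℝ) / 4) * w ^ ((1 : ℝ) / 4) := by
  have hroot : y ^ ((1 : ℝ) / 2) * z ^ ((1 : ℝ) / 4) * w ^ ((1 : ℝ) / 4)
      = (y ^ 2 * z * w) ^ ((1 : ℝ) / 4) := by
    rw [Real.mul_rpow (by positivity) hw, Real.mul_rpow (by positivity) hz,
      ← Real.rpow_natCast_mul hy]
    norm_num
  calc x = (x ^ 4) ^ ((4 : ℕ)⁻¹ : ℝ) := (Real.pow_rpow_inv_natCast hx (by norm_num)).symm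
    _ ≤ (y ^ 2 * z * w) ^ ((1 : ℝ) / 4) := by
      rw [one_div]
      exact_mod_cast Real.rpow_le_rpow (by positivity) h (by norm_num)
    _ = _ := hroot.symm

theorem sum_filter_add_pos_abs_sub {ι : Type*} (S : Finset ι) (a b : ι → ℝ)
    (ha : ∀ i ∈ S, 0 ≤ a i) (hb : ∀ i ∈ S, 0 ≤ b i) :
    ∑ i ∈ S.filter (fun i => 0 < a i + b i), |a i - b i| = ∑ i ∈ S, |a i - b i| := by
  refine sum_filter_of_ne fun i hi hne => ?_
  by_contra! hle
  exact hne (by rw [abs_eq_zero]; linarith [ha i hi, hb i hi])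

/-- Generalized Hölder bound used in Case 3 of the proof of Lemma 3.2 (ii):
`∑ᵢ |aᵢ − bᵢ| ≤ (∑_{i : aᵢ+bᵢ>0} (aᵢ−bᵢ)²/√(aᵢ+bᵢ))^{1/2} · (∑ᵢ (aᵢ+bᵢ))^{1/4} · |S|^{1/4}`. -/
theorem holder_chi_square_bound {ι : Type*} (S : Finset ι) (a b : ι → ℝ)
    (ha : ∀ i ∈ S, 0 ≤ a i) (hb : ∀ i ∈ S, 0 ≤ b i) :
    ∑ i ∈ S, |a i - b i| ≤
      (∑ i ∈ S.filter (fun i => 0 < a i + b i), (a i - b i) ^ 2 / Real.sqrt (a i + b i))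
          ^ ((1 : ℝ) / 2)
        * (∑ i ∈ S, (a i + b i)) ^ ((1 : ℝ) / 4)
        * (S.card : ℝ) ^ ((1 : ℝ) / 4) := by
  set T := S.filter (fun i => 0 < a i + b i)
  have hTS : T ⊆ S := filter_subset _ _
  have hsT : ∀ i ∈ T, 0 < a i + b i := fun i hi => (mem_filter.mp hi).2
  have hCS := sq_sum_abs_le_sum_sq_div_mul_sum T (fun i => a i - b i) (fun i => √(a i + b i))
    fun i hi => Real.sqrt_pos.mpr (hsT i hi)
  have hroots : (∑ i ∈ T, √(a i + b i)) ^ 2 ≤ #S * ∑ i ∈ S, (a i + b i) :=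
    calc _ ≤ #T * ∑ i ∈ T, (a i + b i) :=
          sq_sum_sqrt_le_card_mul_sum T _ fun i hi => (hsT i hi).le
      _ ≤ #S * ∑ i ∈ S, (a i + b i) := by
          gcongr
          · exact sum_nonneg fun i hi => (hsT i hi).le
          · exact fun i hi _ => add_nonneg (ha i hi) (hb i hi)
  rw [← sum_filter_add_pos_abs_sub S a b ha hb]
  refine le_rpow_mul_rpow_mul_rpow_of_pow_four_le (sum_nonneg fun _ _ => abs_nonneg _)
    (sum_nonneg fun _ _ => by positivity) (sum_nonneg fun i hi => add_nonneg (ha i hi) (hb i hi))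
    (Nat.cast_nonneg _) ?_
  calc (∑ i ∈ T, |a i - b i|) ^ 4 = ((∑ i ∈ T, |a i - b i|) ^ 2) ^ 2 := by ring
    _ ≤ ((∑ i ∈ T, (a i - b i) ^ 2 / √(a i + b i)) * ∑ i ∈ T, √(a i + b i)) ^ 2 := by
      gcongr
    _ ≤ (∑ i ∈ T, (a i - b i) ^ 2 / √(a i + b i)) ^ 2 * (#S * ∑ i ∈ S, (a i + b i)) := by
      rw [mul_pow]
      gcongr
    _ = _ := by ring
end

section
/- There exists a universal constant C > 0 such that the following holds. Let α be a finite set and let c : α → ℕ be a count function with total size T = ∑_u c(u). Color each of the T items (c(u) items of each value u) independently with a fair coin, placing it in S or in S'. Let M = ∑_u c(u)·1[c(u) ≥ 2], let s(u) be the number of items of value u placed in S, and let N = ∑_u s(u)·1[s(u) ≥ 2]. Then for every δ ∈ (0,1): Pr[ M > C·(N + log(1/δ)) ] ≤ δ. -/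
/-!
A Chernoff bound through the exponential moment `∑_ω 2^(-N ω)`. Colourings of the copies of
distinct values are independent, so this sum factorizes over the values. For a value with `m`
copies, `s` of which land in `S`, one has `2^(-s·1[s ≥ 2]) ≤ 2^(-s) + 1[s = 1]/2`; averaging over
the `2^m` colourings gives `(3/4)^m + m/2^(m+1) ≤ (19/20)^m` once `m ≥ 2`. Hence
`E[2^(-N)] ≤ (19/20)^M`. The bad event lies inside `N ≤ M/40`, and it is empty unless
`log(1/δ) ≤ M/40`; Markov's inequality for `2^(-N)` then gives the bound with `C = 40`.
-/

open scoped BigOperators Classical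

/-- The number of non-singleton items of the multiset with count function `c`:
`M = ∑ u, c(u)·1[c(u) ≥ 2]`. -/
def Mcount {α : Type*} [Fintype α] (c : α → ℕ) : ℕ :=
  ∑ u, if 2 ≤ c u then c u else 0

/-- Given a coloring `ω` of the items (placing each item in `S` or `S'`, with `true`
meaning `S`), the number of items of value `u` placed in `S`. -/
noncomputable def sCount {α : Type*} [Fintype α] (c : α → ℕ)
    (ω : (Σ u : α, Fin (c u)) → Bool) (u : α) : ℕ :=
  (Finset.univ.filter (fun j : Fin (c u) => ω ⟨u, j⟩ = true)).card

/-- The number of items placed in `S` whose value occurs at least twice among the items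
placed in `S`: `N = ∑ u, s(u)·1[s(u) ≥ 2]`. -/
noncomputable def Ncount {α : Type*} [Fintype α] (c : α → ℕ)
    (ω : (Σ u : α, Fin (c u)) → Bool) : ℕ :=
  ∑ u, if 2 ≤ sCount c ω u then sCount c ω u else 0

open Finset

def nonsingletonPart (k : ℕ) : ℕ := if 2 ≤ k then k else 0

theorem sum_sigma_fun_prod_eq_prod_sum {α γ R : Type*} {β : α → Type*} [Fintype α]
    [DecidableEq α] [∀ u, Fintype (β u)] [∀ u, DecidableEq (β u)] [DecidableEq (Σ u, β u)]
    [Fintype γ] [CommSemiring R] (g : ∀ u, (β u → γ) → R) :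
    ∑ ω : (Σ u, β u) → γ, ∏ u, g u (fun j => ω ⟨u, j⟩) = ∏ u, ∑ f : β u → γ, g u f := by
  rw [Fintype.prod_sum]
  exact Fintype.sum_equiv (Equiv.piCurry fun _ _ => γ) _ _ fun _ => rfl

theorem sum_bool_fun_eq_sum_finset {ι M : Type*} [Fintype ι] [DecidableEq ι] [AddCommMonoid M]
    (g : ℕ → M) :
    ∑ f : ι → Bool, g #{i | f i = true} = ∑ s : Finset ι, g #s :=
  Fintype.sum_equiv (κ := Finset ι)
    ⟨fun f => ({i | f i = true} : Finset ι), fun s i => decide (i ∈ s),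
      fun f => by ext; simp, fun s => by ext; simp⟩ _ _ fun _ => rfl

theorem sum_finset_ite_card_eq_one {ι R : Type*} [Fintype ι] [NonAssocSemiring R] (a : R) :
    ∑ s : Finset ι, (if #s = 1 then a else 0) = Fintype.card ι * a := by
  have : ({s | #s = 1} : Finset (Finset ι)) = powersetCard 1 univ := by
    ext; simp
  rw [← sum_filter, sum_const, nsmul_eq_mul, this, card_powersetCard]
  simp

theorem half_pow_nonsingletonPart_le (k : ℕ) :
    (1 / 2 : ℝ) ^ nonsingletonPart k ≤ (1 / 2) ^ k + if k = 1 then 1 / 2 else 0 := by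
  unfold nonsingletonPart
  rcases Nat.lt_or_ge k 2 with hk | hk
  · interval_cases k <;> norm_num
  · simp [hk, show k ≠ 1 by omega]

theorem three_halves_pow_add_le (m : ℕ) :
    (3 / 2 : ℝ) ^ m + m / 2 ≤ 2 ^ m * (19 / 20) ^ nonsingletonPart m := by
  unfold nonsingletonPart
  rcases Nat.lt_or_ge m 2 with hm | hm
  · interval_cases m <;> norm_num
  · rw [if_pos hm, ← mul_pow]
    induction m, hm using Nat.le_induction with
    | base => norm_num
    | succ m hm ih =>
      have : (0 : ℝ) ≤ (3 / 2) ^ m := by positivity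
      have : (2 : ℝ) ≤ m := by exact_mod_cast hm
      push_cast [pow_succ]
      nlinarith

theorem sum_half_pow_nonsingletonPart_le (ι : Type*) [Fintype ι] [DecidableEq ι] :
    ∑ f : ι → Bool, (1 / 2 : ℝ) ^ nonsingletonPart #{i | f i = true}
      ≤ 2 ^ Fintype.card ι * (19 / 20) ^ nonsingletonPart (Fintype.card ι) := by
  rw [sum_bool_fun_eq_sum_finset fun k => (1 / 2 : ℝ) ^ nonsingletonPart k]
  calc _ ≤ ∑ s : Finset ι, ((1 / 2 : ℝ) ^ #s + if #s = 1 then 1 / 2 else 0) :=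
        sum_le_sum fun s _ => half_pow_nonsingletonPart_le #s
    _ = (3 / 2) ^ Fintype.card ι + Fintype.card ι / 2 := by
        have hbinom := Fintype.sum_pow_mul_eq_add_pow ι (1 / 2 : ℝ) 1
        simp only [one_pow, mul_one] at hbinom
        rw [sum_add_distrib, sum_finset_ite_card_eq_one, hbinom]
        ring
    _ ≤ _ := three_halves_pow_add_le _

theorem sum_half_pow_Ncount_le {α : Type*} [Fintype α] (c : α → ℕ) :
    ∑ ω : (Σ u, Fin (c u)) → Bool, (1 / 2 : ℝ) ^ Ncount c ω
      ≤ 2 ^ (∑ u, c u) * (19 / 20) ^ Mcount c := by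
  calc ∑ ω : (Σ u, Fin (c u)) → Bool, (1 / 2 : ℝ) ^ Ncount c ω
      = ∏ u, ∑ f : Fin (c u) → Bool, (1 / 2 : ℝ) ^ nonsingletonPart #{j | f j = true} := by
        simp only [Ncount, ← prod_pow_eq_pow_sum]
        exact sum_sigma_fun_prod_eq_prod_sum fun u f =>
          (1 / 2 : ℝ) ^ nonsingletonPart #{j | f j = true}
    _ ≤ ∏ u, 2 ^ c u * (19 / 20 : ℝ) ^ nonsingletonPart (c u) :=
        prod_le_prod (fun u _ => sum_nonneg fun f _ => by positivity) fun u _ => by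
          simpa using sum_half_pow_nonsingletonPart_le (Fin (c u))
    _ = 2 ^ (∑ u, c u) * (19 / 20) ^ Mcount c := by
        rw [prod_mul_distrib, prod_pow_eq_pow_sum, prod_pow_eq_pow_sum]
        rfl

theorem exp_neg_le_half_pow {n : ℕ} {x : ℝ} (h : (n : ℝ) ≤ x) :
    Real.exp (-x) ≤ (1 / 2) ^ n := by
  have hexp : Real.exp (-1) ≤ 1 / 2 := by
    rw [Real.exp_neg, one_div]
    exact inv_anti₀ two_pos (by linarith [Real.add_one_le_exp 1])
  calc Real.exp (-x) ≤ Real.exp (-1) ^ n := by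
        rw [← Real.exp_nat_mul]
        exact Real.exp_le_exp.2 (by linarith)
    _ ≤ (1 / 2) ^ n := pow_le_pow_left₀ (Real.exp_pos _).le hexp n

theorem nineteen_twentieths_pow_le_mul_exp {n : ℕ} {δ : ℝ} (hδ : 0 < δ)
    (h : Real.log (1 / δ) ≤ n / 40) : (19 / 20 : ℝ) ^ n ≤ δ * Real.exp (-(n / 40)) := by
  rw [one_div, Real.log_inv] at h
  calc (19 / 20 : ℝ) ^ n ≤ Real.exp (-(1 / 20)) ^ n :=
        pow_le_pow_left₀ (by norm_num) (by linarith [Real.one_sub_le_exp_neg (1 / 20)]) n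
    _ = Real.exp (-(n / 20)) := by rw [← Real.exp_nat_mul]; ring_nf
    _ ≤ Real.exp (Real.log δ + -(n / 40)) := Real.exp_le_exp.2 (by linarith)
    _ = δ * Real.exp (-(n / 40)) := by rw [Real.exp_add, Real.exp_log hδ]

theorem card_Ncount_le_mul_exp_le {α : Type*} [Fintype α] (c : α → ℕ) (t : ℝ) :
    #{ω : (Σ u, Fin (c u)) → Bool | (Ncount c ω : ℝ) ≤ t} * Real.exp (-t)
      ≤ 2 ^ (∑ u, c u) * (19 / 20) ^ Mcount c :=
  calc _ = #{ω : (Σ u, Fin (c u)) → Bool | (Ncount c ω : ℝ) ≤ t} • Real.exp (-t) :=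
        (nsmul_eq_mul _ _).symm
    _ ≤ ∑ ω ∈ {ω : (Σ u, Fin (c u)) → Bool | (Ncount c ω : ℝ) ≤ t}, (1 / 2 : ℝ) ^ Ncount c ω :=
        card_nsmul_le_sum _ _ _ fun _ hω => exp_neg_le_half_pow (mem_filter.1 hω).2
    _ ≤ ∑ ω, (1 / 2 : ℝ) ^ Ncount c ω := sum_le_univ_sum_of_nonneg fun _ => by positivity
    _ ≤ _ := sum_half_pow_Ncount_le c

/-- Lemma 4.4: under a uniformly random partition of the items into `S` and `S'`, the
number `M` of non-singletons of the whole multiset exceeds `C·(N + log(1/δ))` with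
probability at most `δ`, where `N` is the number of non-singletons within `S`. -/
theorem nonsingletons_halve :
    ∃ C > (0 : ℝ), ∀ (α : Type) [Fintype α] (c : α → ℕ) (δ : ℝ), 0 < δ → δ < 1 →
      (((Finset.univ : Finset ((Σ u : α, Fin (c u)) → Bool)).filter
          (fun ω => C * ((Ncount c ω : ℝ) + Real.log (1 / δ)) < (Mcount c : ℝ))).card : ℝ)
        / (Fintype.card ((Σ u : α, Fin (c u)) → Bool) : ℝ) ≤ δ := by
  refine ⟨40, by norm_num, fun α _ c δ hδ0 hδ1 => ?_⟩
  set E := (univ : Finset ((Σ u : α, Fin (c u)) → Bool)).filter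
    fun ω => 40 * ((Ncount c ω : ℝ) + Real.log (1 / δ)) < (Mcount c : ℝ)
  set t : ℝ := Mcount c / 40 with ht
  have hL : 0 ≤ Real.log (1 / δ) := Real.log_nonneg (by rw [le_div_iff₀ hδ0]; linarith)
  rcases E.eq_empty_or_nonempty with hE | ⟨ω₀, hω₀⟩
  · simpa [hE] using hδ0.le
  have hLt : Real.log (1 / δ) ≤ t := by
    linarith [(mem_filter.1 hω₀).2, (Nat.cast_nonneg (Ncount c ω₀) : (0 : ℝ) ≤ _)]
  have hEt : #E ≤ #{ω : (Σ u, Fin (c u)) → Bool | (Ncount c ω : ℝ) ≤ t} :=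
    card_le_card <| monotone_filter_right _ fun _ _ hω => by linarith
  have hcard : (Fintype.card ((Σ u : α, Fin (c u)) → Bool) : ℝ) = 2 ^ ∑ u, c u := by simp
  rw [hcard, div_le_iff₀ (by positivity), mul_comm δ]
  refine le_of_mul_le_mul_right ?_ (Real.exp_pos (-t))
  calc (#E : ℝ) * Real.exp (-t)
      ≤ #{ω : (Σ u, Fin (c u)) → Bool | (Ncount c ω : ℝ) ≤ t} * Real.exp (-t) := by gcongr
    _ ≤ 2 ^ (∑ u, c u) * (19 / 20) ^ Mcount c := card_Ncount_le_mul_exp_le c t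
    _ ≤ 2 ^ (∑ u, c u) * δ * Real.exp (-t) := by
      rw [mul_assoc]
      gcongr
      exact nineteen_twentieths_pow_le_mul_exp hδ0 hLt
end

section
/- Let α be a finite set and let a, b : α → ℕ be count functions. For each u ∈ α independently, let X_u^{p0} ~ Binomial(a(u), 1/2) and set X_u^{p1} = a(u) − X_u^{p0}; likewise let X_u^{q0} ~ Binomial(b(u), 1/2) and X_u^{q1} = b(u) − X_u^{q0}, with all these random variables mutually independent across u and between the a- and b-splits. Define Z = ∑_u (|X_u^{p0} − X_u^{q0}| + |X_u^{p1} − X_u^{q1}| − |X_u^{p0} − X_u^{p1}| − |X_u^{q0} − X_u^{q1}|), N_p = ∑_u a(u)·1[a(u) ≥ 2], and N_q = ∑_u b(u)·1[a(u) + b(u) ≥ 2]. Then Pr[ Z < N_p/6 − 2·N_q − 100 ] < 1/2. -/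
/-!
With `W = ∑_{a(u) ≥ 2} |X_u^{p0} − X_u^{p1}|`, the triangle inequality gives `Z ≥ N_p − W − 2 N_q`
for every outcome, so the bad event forces `W > (5/6) N_p + 100`. Each summand
`|2 X_u^{p0} − a(u)|` is the absolute value of a sum of `a(u)` independent signs: its second moment
is `a(u)`, hence by Cauchy–Schwarz its mean is at most `√a(u) ≤ (17/24) a(u)` once `a(u) ≥ 2`.
The summands depend on disjoint sets of coins, so they are uncorrelated and `Var W ≤ N_p`.
Chebyshev's inequality at distance `N_p/8 + 100` above the mean bound `(17/24) N_p` bounds the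
probability by `N_p / (N_p/8 + 100)² < 1/2`.
-/

open scoped BigOperators Classical

/-- `N_p = ∑ u, a(u)·1[a(u) ≥ 2]`. -/
def NpCount {α : Type*} [Fintype α] (a : α → ℕ) : ℕ :=
  ∑ u, if 2 ≤ a u then a u else 0

/-- `N_q = ∑ u, b(u)·1[a(u) + b(u) ≥ 2]`. -/
def NqCount {α : Type*} [Fintype α] (a b : α → ℕ) : ℕ :=
  ∑ u, if 2 ≤ a u + b u then b u else 0

open Finset

section FiniteExpectation

theorem expect_mul_of_dependsOn {I β : Type*} [Fintype I] [DecidableEq I] [Fintype β] [Nonempty β]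
    {s : Set I} {F G : (I → β) → ℝ} (hF : DependsOn F s) (hG : DependsOn G sᶜ) :
    𝔼 ω, F ω * G ω = (𝔼 ω, F ω) * 𝔼 ω, G ω := by
  obtain ⟨f, rfl⟩ := dependsOn_iff_exists_comp.mp hF
  obtain ⟨g, rfl⟩ := dependsOn_iff_exists_comp.mp hG
  have hprod (h : (s → β) → (↥sᶜ → β) → ℝ) :
      𝔼 ω : I → β, h (s.domRestrict ω) (sᶜ.domRestrict ω) = 𝔼 x, 𝔼 y, h x y := by
    rw [← Finset.expect_product', Finset.univ_product_univ]
    exact Fintype.expect_equiv (Equiv.piEquivPiSubtypeProd (· ∈ s) fun _ => β) _ _ fun _ => rfl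
  simp only [Function.comp_apply]
  rw [hprod fun x y => f x * g y, hprod fun x _ => f x, hprod fun _ y => g y]
  simp only [Fintype.expect_const, Fintype.expect_mul_expect]

variable {Ω : Type*} [Fintype Ω]

theorem expect_sq_sum_of_orthogonal {κ : Type*} (s : Finset κ) (h : κ → Ω → ℝ)
    (horth : ∀ i ∈ s, ∀ j ∈ s, i ≠ j → 𝔼 ω, h i ω * h j ω = 0) :
    𝔼 ω, (∑ i ∈ s, h i ω) ^ 2 = ∑ i ∈ s, 𝔼 ω, h i ω ^ 2 := by
  simp only [sq, Finset.sum_mul_sum, Finset.expect_sum_comm]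
  refine Finset.sum_congr rfl fun i hi => ?_
  exact Finset.sum_eq_single_of_mem i hi fun j hj hji => horth i hi j hj hji.symm

theorem expect_sub_expect [Nonempty Ω] (f : Ω → ℝ) : 𝔼 ω, (f ω - 𝔼 ω', f ω') = 0 := by
  rw [Finset.expect_sub_distrib, Fintype.expect_const, sub_self]

theorem expect_sq_sub_expect_le [Nonempty Ω] (f : Ω → ℝ) :
    𝔼 ω, (f ω - 𝔼 ω', f ω') ^ 2 ≤ 𝔼 ω, f ω ^ 2 := by
  set m := 𝔼 ω', f ω'
  have hexpand : ∀ ω, (f ω - m) ^ 2 = f ω ^ 2 - m ^ 2 - 2 * m * (f ω - m) := fun ω => by ring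
  simp only [hexpand, Finset.expect_sub_distrib, ← Finset.mul_expect, Fintype.expect_const]
  nlinarith [sq_nonneg m]

theorem card_filter_div_card_le_expect_sq (f : Ω → ℝ) (c : ℝ) {t : ℝ} (ht : 0 < t) :
    (#{ω | c + t < f ω} : ℝ) / Fintype.card Ω ≤ 𝔼 ω, (f ω - c) ^ 2 / t ^ 2 := by
  rw [Finset.card_filter, Nat.cast_sum, ← Fintype.expect_eq_sum_div_card]
  refine Finset.expect_le_expect fun ω _ => ?_
  split_ifs with hω
  · rw [Nat.cast_one, one_le_div (by positivity)]
    nlinarith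
  · rw [Nat.cast_zero]
    positivity

theorem card_filter_div_card_prod_le {X Y : Type*} [Fintype X] [Fintype Y] [Nonempty Y]
    {p : X × Y → Prop} {q : X → Prop} (h : ∀ z, p z → q z.1) :
    (#{z | p z} : ℝ) / Fintype.card (X × Y) ≤ (#{x | q x} : ℝ) / Fintype.card X := by
  have hcard : #{z | p z} ≤ #{x | q x} * Fintype.card Y := by
    rw [← Finset.card_univ, ← Finset.card_product, ← Finset.filter_product_left,
      Finset.univ_product_univ]
    exact Finset.card_le_card (Finset.monotone_filter_right _ fun z _ => h z)
  rw [Fintype.card_prod, Nat.cast_mul, mul_comm, ← div_div]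
  gcongr
  rw [div_le_iff₀ (by simp [Fintype.card_pos])]
  exact_mod_cast hcard

end FiniteExpectation

section Rademacher

def boolSign (b : Bool) : ℝ := if b then 1 else -1

variable {I : Type*} [Fintype I] [DecidableEq I]

theorem expect_boolSign_apply_eq_zero (i : I) : 𝔼 ω : I → Bool, boolSign (ω i) = 0 := by
  have hflip : Function.Involutive fun ω : I → Bool => Function.update ω i !(ω i) := by
    intro ω; simp
  have h := Fintype.expect_equiv hflip.toPerm (fun ω => boolSign (ω i))
    (fun ω => -boolSign (ω i)) fun ω => by
      simp only [Function.Involutive.coe_toPerm, Function.update_self]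
      cases ω i <;> norm_num [boolSign]
  rw [Finset.expect_neg_distrib] at h
  linarith

theorem expect_sq_sum_boolSign (J : Finset I) :
    𝔼 ω : I → Bool, (∑ j ∈ J, boolSign (ω j)) ^ 2 = #J := by
  rw [expect_sq_sum_of_orthogonal]
  · have hsq (b : Bool) : boolSign b ^ 2 = 1 := by cases b <;> norm_num [boolSign]
    simp [hsq]
  · intro i _ j _ hij
    rw [expect_mul_of_dependsOn (s := {i}) (fun ω ω' h => by rw [h i rfl])
      (fun ω ω' h => by rw [h j hij.symm]), expect_boolSign_apply_eq_zero, zero_mul]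

end Rademacher

section Imbalance

variable {α : Type*} [Fintype α] (a : α → ℕ)

theorem sCount_le (ω : (Σ u : α, Fin (a u)) → Bool) (u : α) : sCount a ω u ≤ a u :=
  (Finset.card_filter_le _ _).trans_eq (Finset.card_fin _)

theorem two_mul_sCount_sub_eq_sum_boolSign (ω : (Σ u : α, Fin (a u)) → Bool) (u : α) :
    2 * (sCount a ω u : ℝ) - a u
      = ∑ i ∈ Finset.univ.map (Function.Embedding.sigmaMk u), boolSign (ω i) := by
  have hsign (b : Bool) : boolSign b = 2 * (if b then 1 else 0) - 1 := by
    cases b <;> norm_num [boolSign]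
  rw [Finset.sum_map]
  simp only [Function.Embedding.sigmaMk_apply, hsign, Finset.sum_sub_distrib, ← Finset.mul_sum,
    Finset.sum_boole, Finset.sum_const, Finset.card_univ, Fintype.card_fin, sCount]
  simp

theorem expect_sq_two_mul_sCount_sub (u : α) :
    𝔼 ω : (Σ u : α, Fin (a u)) → Bool, (2 * (sCount a ω u : ℝ) - a u) ^ 2 = (a u : ℝ) := by
  simp only [two_mul_sCount_sub_eq_sum_boolSign, expect_sq_sum_boolSign, Finset.card_map,
    Finset.card_univ, Fintype.card_fin]


noncomputable def imbalance (u : α) (ω : (Σ u : α, Fin (a u)) → Bool) : ℝ :=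
  if 2 ≤ a u then |2 * (sCount a ω u : ℝ) - a u| else 0

noncomputable def totalImbalance (ω : (Σ u : α, Fin (a u)) → Bool) : ℝ :=
  ∑ u, imbalance a u ω

theorem natCast_NpCount : (NpCount a : ℝ) = ∑ u, if 2 ≤ a u then (a u : ℝ) else 0 := by
  simp [NpCount, Nat.cast_sum, Nat.cast_ite]

theorem expect_imbalance_sq (u : α) :
    𝔼 ω, imbalance a u ω ^ 2 = if 2 ≤ a u then (a u : ℝ) else 0 := by
  unfold imbalance
  split_ifs
  · simp only [sq_abs, expect_sq_two_mul_sCount_sub]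
  · simp

theorem expect_imbalance_le (u : α) :
    𝔼 ω, imbalance a u ω ≤ 17 / 24 * if 2 ≤ a u then (a u : ℝ) else 0 := by
  have hCS := Finset.expect_mul_sq_le_sq_mul_sq Finset.univ (imbalance a u) 1
  simp only [Pi.one_apply, mul_one, one_pow, Fintype.expect_const, expect_imbalance_sq] at hCS
  split_ifs at hCS ⊢ with ha
  · have ha2 : (2 : ℝ) ≤ a u := by exact_mod_cast ha
    nlinarith
  · nlinarith


theorem imbalance_dependsOn (u : α) : DependsOn (imbalance a u) {i | i.1 = u} := by
  intro ω ω' h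
  have hcount : sCount a ω u = sCount a ω' u := by
    simp only [sCount]
    congr 1
    exact Finset.filter_congr fun j _ => by rw [h ⟨u, j⟩ rfl]
  simp only [imbalance, hcount]

theorem expect_sq_totalImbalance_sub_le :
    𝔼 ω, (totalImbalance a ω - 𝔼 ω', totalImbalance a ω') ^ 2 ≤ NpCount a := by
  have hcenter (ω : (Σ u : α, Fin (a u)) → Bool) :
      totalImbalance a ω - 𝔼 ω', totalImbalance a ω'
        = ∑ u, (imbalance a u ω - 𝔼 ω', imbalance a u ω') := by
    simp only [totalImbalance, Finset.expect_sum_comm, Finset.sum_sub_distrib]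
  have hdep (u : α) :
      DependsOn (fun ω => imbalance a u ω - 𝔼 ω', imbalance a u ω') {i | i.1 = u} :=
    fun ω ω' h => by simp only [imbalance_dependsOn a u h]
  simp only [hcenter]
  rw [expect_sq_sum_of_orthogonal, natCast_NpCount]
  · refine Finset.sum_le_sum fun u _ => ?_
    exact (expect_sq_sub_expect_le _).trans_eq (expect_imbalance_sq a u)
  · intro u _ v _ huv
    rw [expect_mul_of_dependsOn (hdep u) ((hdep v).mono fun i hi hiu => huv (hiu.symm.trans hi)),
      expect_sub_expect, zero_mul]

theorem card_filter_totalImbalance_div_card_lt :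
    (#{ω | 5 / 6 * (NpCount a : ℝ) + 100 < totalImbalance a ω} : ℝ)
      / Fintype.card ((Σ u : α, Fin (a u)) → Bool) < 1 / 2 := by
  set Np : ℝ := (NpCount a : ℝ)
  set μ := 𝔼 ω, totalImbalance a ω
  have hmean : μ ≤ 17 / 24 * Np := by
    simp only [μ, totalImbalance, Finset.expect_sum_comm, Np, natCast_NpCount, Finset.mul_sum]
    exact Finset.sum_le_sum fun u _ => expect_imbalance_le a u
  have ht : 0 < Np / 8 + 100 := by positivity
  have hevent : #{ω | 5 / 6 * Np + 100 < totalImbalance a ω}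
      ≤ #{ω | μ + (Np / 8 + 100) < totalImbalance a ω} :=
    Finset.card_le_card (Finset.monotone_filter_right _ fun ω _ hω => by linarith)
  calc _ ≤ (#{ω | μ + (Np / 8 + 100) < totalImbalance a ω} : ℝ)
        / Fintype.card ((Σ u : α, Fin (a u)) → Bool) := by gcongr
    _ ≤ 𝔼 ω, (totalImbalance a ω - μ) ^ 2 / (Np / 8 + 100) ^ 2 :=
      card_filter_div_card_le_expect_sq _ _ ht
    _ ≤ Np / (Np / 8 + 100) ^ 2 := by
      rw [← Finset.expect_div]
      gcongr
      exact expect_sq_totalImbalance_sub_le a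
    _ < 1 / 2 := by
      rw [div_lt_div_iff₀ (by positivity) two_pos]
      nlinarith [sq_nonneg (Np / 8 - 100)]

end Imbalance

theorem sub_two_mul_le_Z_summand {A B p q : ℕ} (hp : p ≤ A) (hq : q ≤ B) :
    (if 2 ≤ A then (A : ℝ) - |2 * (p : ℝ) - A| else 0) - 2 * (if 2 ≤ A + B then (B : ℝ) else 0)
      ≤ |(p : ℝ) - q| + |((A : ℝ) - p) - ((B : ℝ) - q)| - |(p : ℝ) - ((A : ℝ) - p)|
        - |(q : ℝ) - ((B : ℝ) - q)| := by
  have hpA : (p : ℝ) ≤ A := by exact_mod_cast hp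
  have hqB : (q : ℝ) ≤ B := by exact_mod_cast hq
  have hq0 : (0 : ℝ) ≤ q := q.cast_nonneg
  have hqsplit : |(q : ℝ) - (B - q)| ≤ B := abs_le.mpr ⟨by linarith, by linarith⟩
  have htri :
      |(p : ℝ) - (A - p)| ≤ |(p : ℝ) - q| + |((A : ℝ) - p) - (B - q)| + |(q : ℝ) - (B - q)| := by
    have := abs_sub_le (p : ℝ) q (A - p)
    have := abs_sub_le (q : ℝ) (B - q) (A - p)
    rw [abs_sub_comm (B - q : ℝ)] at this
    linarith
  split_ifs with hA hAB hAB
  · have h1 := le_abs_self ((p : ℝ) - q)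
    have h2 := le_abs_self (((A : ℝ) - p) - (B - q))
    have : (2 : ℝ) * p - A = p - (A - p) := by ring
    rw [this]
    linarith
  · omega
  · linarith
  · obtain rfl | rfl : A = 0 ∨ B = 0 := by omega
    · obtain rfl : p = 0 := by omega
      simp only [Nat.cast_zero, sub_zero, zero_sub, sub_self, abs_neg, abs_zero, mul_zero]
      linarith [abs_sub (q : ℝ) (B - q), abs_nonneg (q : ℝ), abs_nonneg ((B : ℝ) - q)]
    · obtain rfl : q = 0 := by omega
      simp only [Nat.cast_zero, sub_zero, sub_self, abs_zero, mul_zero]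
      linarith [abs_sub (p : ℝ) (A - p), abs_nonneg (p : ℝ), abs_nonneg ((A : ℝ) - p)]

theorem sub_totalImbalance_sub_le_Z {α : Type*} [Fintype α] (a b : α → ℕ)
    (x : (Σ u : α, Fin (a u)) → Bool) (y : (Σ u : α, Fin (b u)) → Bool) :
    (NpCount a : ℝ) - totalImbalance a x - 2 * (NqCount a b : ℝ)
      ≤ ∑ u : α,
          (|(sCount a x u : ℝ) - (sCount b y u : ℝ)|
            + |((a u : ℝ) - (sCount a x u : ℝ)) - ((b u : ℝ) - (sCount b y u : ℝ))|
            - |(sCount a x u : ℝ) - ((a u : ℝ) - (sCount a x u : ℝ))|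
            - |(sCount b y u : ℝ) - ((b u : ℝ) - (sCount b y u : ℝ))|) := by
  have hNq : (NqCount a b : ℝ) = ∑ u, if 2 ≤ a u + b u then (b u : ℝ) else 0 := by
    simp [NqCount, Nat.cast_sum, Nat.cast_ite]
  rw [natCast_NpCount, hNq, totalImbalance, ← Finset.sum_sub_distrib, Finset.mul_sum,
    ← Finset.sum_sub_distrib]
  refine Finset.sum_le_sum fun u _ => le_of_eq_of_le ?_
    (sub_two_mul_le_Z_summand (sCount_le a x u) (sCount_le b y u))
  simp only [imbalance]
  split_ifs <;> ring

/-- Lemma 4.7: splitting each count `a(u)` as `X_u^{p0} ~ Binomial(a(u), 1/2)`,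
`X_u^{p1} = a(u) − X_u^{p0}` (and similarly for `b`), all independent — realized here by a
uniformly random flagging of the items — the statistic `Z` satisfies
`Pr[Z < N_p/6 − 2·N_q − 100] < 1/2`. -/
theorem Z_at_least_Np_whp (α : Type) [Fintype α] (a b : α → ℕ) :
    (((Finset.univ :
        Finset (((Σ u : α, Fin (a u)) → Bool) × ((Σ u : α, Fin (b u)) → Bool))).filter
        (fun ω =>
          (∑ u : α,
            (|(sCount a ω.1 u : ℝ) - (sCount b ω.2 u : ℝ)|
              + |((a u : ℝ) - (sCount a ω.1 u : ℝ)) - ((b u : ℝ) - (sCount b ω.2 u : ℝ))|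
              - |(sCount a ω.1 u : ℝ) - ((a u : ℝ) - (sCount a ω.1 u : ℝ))|
              - |(sCount b ω.2 u : ℝ) - ((b u : ℝ) - (sCount b ω.2 u : ℝ))|))
            < (NpCount a : ℝ) / 6 - 2 * (NqCount a b : ℝ) - 100)).card : ℝ)
      / (Fintype.card (((Σ u : α, Fin (a u)) → Bool) × ((Σ u : α, Fin (b u)) → Bool)) : ℝ)
      < 1 / 2 := by
  calc _ ≤ (#{x | 5 / 6 * (NpCount a : ℝ) + 100 < totalImbalance a x} : ℝ)
        / Fintype.card ((Σ u : α, Fin (a u)) → Bool) :=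
        card_filter_div_card_prod_le fun ω hω => by
          linarith [sub_totalImbalance_sub_le_Z a b ω.1 ω.2]
    _ < 1 / 2 := card_filter_totalImbalance_div_card_lt a
end

section
/- Let V be a countable set and let p, q be probability mass functions on V with p(v) > 0 and q(v) > 0 for every v ∈ V. Then, with both sides valued in [0, ∞], D(p‖q) + D(q‖p) ≤ ∑_{v ∈ V} ((p(v) + q(v))/4) · [ (1 − p(v)/q(v))² + (1 − q(v)/p(v))² ], where D(p‖q) = ∑_{v} p(v)·log(p(v)/q(v)) is the Kullback–Leibler divergence. -/
/-!
Pointwise, with `t = a / b`: `log t ≤ sinh (log t) = (t - t⁻¹) / 2` for `t ≥ 1` (and the reverse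
for `t ≤ 1`), so `(a - b) log (a / b) ≤ (a + b)(a - b)² / (2ab)`. The right-hand side of the
theorem has the same shape with `2ab` replaced by `4a²b² / (a² + b²)`, which is no larger by AM-GM.
-/

open Real

lemma Real.log_le_half_sub_inv {t : ℝ} (ht : 1 ≤ t) : log t ≤ (t - t⁻¹) / 2 :=
  sinh_log (by linarith) ▸ self_le_sinh_iff.mpr (log_nonneg ht)

lemma Real.sub_one_mul_log_le {t : ℝ} (ht : 0 < t) :
    (t - 1) * log t ≤ (t - 1) * ((t - t⁻¹) / 2) := by
  rcases le_total 1 t with h | h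
  · exact mul_le_mul_of_nonneg_left (log_le_half_sub_inv h) (by linarith)
  · have hinv : log t⁻¹ ≤ (t⁻¹ - t⁻¹⁻¹) / 2 := log_le_half_sub_inv (one_le_inv₀ ht |>.mpr h)
    rw [log_inv, inv_inv] at hinv
    exact mul_le_mul_of_nonpos_left (by linarith) (by linarith)

lemma Real.sub_mul_log_div_le {a b : ℝ} (ha : 0 < a) (hb : 0 < b) :
    (a - b) * log (a / b) ≤ (a + b) * (a - b) ^ 2 / (2 * a * b) := by
  have hscaled := mul_le_mul_of_nonneg_left (sub_one_mul_log_le (div_pos ha hb)) hb.le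
  calc (a - b) * log (a / b) = b * ((a / b - 1) * log (a / b)) := by field_simp
    _ ≤ b * ((a / b - 1) * ((a / b - (a / b)⁻¹) / 2)) := hscaled
    _ = (a + b) * (a - b) ^ 2 / (2 * a * b) := by field_simp; ring

lemma sub_mul_log_div_le_rational {a b : ℝ} (ha : 0 < a) (hb : 0 < b) :
    (a - b) * log (a / b) ≤ (a + b) / 4 * ((1 - a / b) ^ 2 + (1 - b / a) ^ 2) := by
  have hamgm : 2 * a * b ≤ a ^ 2 + b ^ 2 := by nlinarith [sq_nonneg (a - b)]
  calc (a - b) * log (a / b) ≤ (a + b) * (a - b) ^ 2 / (2 * a * b) := sub_mul_log_div_le ha hb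
    _ ≤ (a + b) * (a - b) ^ 2 * (a ^ 2 + b ^ 2) / (4 * a ^ 2 * b ^ 2) := by
      rw [div_le_div_iff₀ (by positivity) (by positivity)]
      have hpos : 0 ≤ (a + b) * (a - b) ^ 2 * (2 * a * b) := by positivity
      nlinarith
    _ = (a + b) / 4 * ((1 - a / b) ^ 2 + (1 - b / a) ^ 2) := by field_simp; ring

theorem symmetrized_KL_le_rational_general {V : Type*} (p q : V → ℝ)
    (hp : ∀ v, 0 < p v) (hq : ∀ v, 0 < q v) :
    ∑' v, ENNReal.ofReal ((p v - q v) * Real.log (p v / q v)) ≤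
      ∑' v, ENNReal.ofReal
        (((p v + q v) / 4) * ((1 - p v / q v) ^ 2 + (1 - q v / p v) ^ 2)) :=
  ENNReal.tsum_le_tsum fun v =>
    ENNReal.ofReal_le_ofReal (sub_mul_log_div_le_rational (hp v) (hq v))

/-- Lemma 5.1: the symmetrized KL divergence `D(p‖q) + D(q‖p) = ∑ᵥ (p(v) − q(v))·log(p(v)/q(v))`
(a sum of nonnegative terms, valued in `[0,∞]`) is bounded above by
`∑ᵥ ((p(v)+q(v))/4)·[(1 − p(v)/q(v))² + (1 − q(v)/p(v))²]`. -/
theorem symmetrized_KL_le_rational {V : Type*} [Countable V] (p q : V → ℝ)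
    (hp : ∀ v, 0 < p v) (hq : ∀ v, 0 < q v)
    (hps : ∑' v, p v = 1) (hqs : ∑' v, q v = 1) :
    ∑' v, ENNReal.ofReal ((p v - q v) * Real.log (p v / q v)) ≤
      ∑' v, ENNReal.ofReal
        (((p v + q v) / 4) * ((1 - p v / q v) ^ 2 + (1 - q v / p v) ^ 2)) :=
  symmetrized_KL_le_rational_general p q hp hq
end
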